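/- arXiv:1506.05165 — 2 statements merged into one kernel-verified Lean document; each statement's English description precedes it below -/
import Mathlib

section
/- For every complex number τ with imaginary part Im τ ≥ √3/2, writing q = exp(2πiτ), one has |q| · ∏_{n=1}^∞ |1 − q^n|^{24} · (2 Im τ)^6 ≤ 1; equivalently, log(|Δ(τ)| (2 Im τ)^6) ≤ 0 where Δ(τ) = q ∏_{n=1}^∞ (1 − q^n)^{24} is the modular discriminant. -/
/-- For every complex number `τ` with `Im τ ≥ √3/2`, writing `q = exp(2πiτ)`, one has
`|q| · ∏_{n=1}^∞ |1 − q^n|^{24} · (2 Im τ)^6 ≤ 1`, i.e. `|Δ(τ)| (2 Im τ)^6 ≤ 1` where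
`Δ(τ) = q ∏_{n=1}^∞ (1 − q^n)^{24}` is the modular discriminant. -/
theorem stmt_0 (τ : ℂ) (hτ : Real.sqrt 3 / 2 ≤ τ.im) :
    ‖Complex.exp (2 * Real.pi * Complex.I * τ)‖ *
      (∏' n : ℕ,
        ‖1 - Complex.exp (2 * Real.pi * Complex.I * τ) ^ (n + 1)‖ ^ 24) *
      (2 * τ.im) ^ 6 ≤ 1 := by
  set y : ℝ := τ.im with hy
  have hsqrt3 : (1.7 : ℝ) ≤ Real.sqrt 3 := by
    rw [show (1.7 : ℝ) = Real.sqrt (1.7 ^ 2) by rw [Real.sqrt_sq]; norm_num]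
    exact Real.sqrt_le_sqrt (by norm_num)
  have hy08 : (0.85 : ℝ) ≤ y := by linarith
  have hpi : (3.14 : ℝ) ≤ Real.pi := by linarith [Real.pi_gt_d6]
  have he1 : (2.7 : ℝ) ≤ Real.exp 1 := by linarith [Real.exp_one_gt_d9]
  have he1' : Real.exp 1 ≤ 2.72 := by linarith [Real.exp_one_lt_d9]
  -- |q| = exp(-2πy)
  have habsq : ‖Complex.exp (2 * Real.pi * Complex.I * τ)‖ =
      Real.exp (-(2 * Real.pi * y)) := by
    rw [Complex.norm_exp]
    congr 1
    have : (2 * ↑Real.pi * Complex.I * τ).re = -(2 * Real.pi * τ.im) := by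
      simp [Complex.mul_re, Complex.mul_im]
    rw [this]
  set r : ℝ := Real.exp (-(2 * Real.pi * y)) with hr
  have hr0 : 0 < r := Real.exp_pos _
  -- r ≤ 0.007
  have hrsmall : r ≤ 0.007 := by
    have h1 : -(2 * Real.pi * y) ≤ -5 := by nlinarith
    have h2 : r ≤ Real.exp (-5) := Real.exp_le_exp.mpr h1
    have h5 : Real.exp 5 = Real.exp 1 ^ (5:ℕ) := by
      rw [← Real.exp_nat_mul]; norm_num
    have h3 : Real.exp (-5) ≤ 0.007 := by
      rw [Real.exp_neg, inv_le_comm₀ (Real.exp_pos 5) (by norm_num), h5]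
      calc (0.007 : ℝ)⁻¹ ≤ 2.7 ^ (5:ℕ) := by norm_num
        _ ≤ Real.exp 1 ^ (5:ℕ) := pow_le_pow_left₀ (by norm_num) he1 5
    linarith
  have hr1 : r < 1 := by linarith
  -- bound on the tprod
  have hsum : Summable (fun n : ℕ => r ^ (n + 1)) := by
    simpa [pow_succ'] using (summable_geometric_of_lt_one hr0.le hr1).mul_left r
  have htsum : ∑' n : ℕ, r ^ (n + 1) = r * (1 - r)⁻¹ := by
    have := tsum_geometric_of_lt_one hr0.le hr1
    calc ∑' n : ℕ, r ^ (n + 1) = ∑' n : ℕ, r * r ^ n := by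
          congr 1; funext n; rw [pow_succ']
      _ = r * ∑' n : ℕ, r ^ n := tsum_mul_left
      _ = r * (1 - r)⁻¹ := by rw [this]
  have hc : r * (1 - r)⁻¹ ≤ 0.0071 := by
    rw [mul_inv_le_iff₀ (by linarith)]
    nlinarith
  set A : ℝ := Real.exp (24 * (r * (1 - r)⁻¹)) with hA
  have hinv : 0 < (1 - r)⁻¹ := inv_pos.mpr (by linarith)
  have hA1 : 1 ≤ A := Real.one_le_exp (by positivity)
  have hkey : ∀ s : Finset ℕ,
      ∏ n ∈ s, ‖1 - Complex.exp (2 * Real.pi * Complex.I * τ) ^ (n + 1)‖ ^ 24 ≤ A := by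
    intro s
    have step : ∀ n : ℕ,
        ‖1 - Complex.exp (2 * Real.pi * Complex.I * τ) ^ (n + 1)‖ ^ 24 ≤
        Real.exp (24 * r ^ (n + 1)) := by
      intro n
      have h1 : ‖1 - Complex.exp (2 * Real.pi * Complex.I * τ) ^ (n + 1)‖ ≤
          1 + r ^ (n + 1) := by
        calc ‖1 - Complex.exp (2 * Real.pi * Complex.I * τ) ^ (n + 1)‖
            ≤ ‖(1:ℂ)‖ + ‖Complex.exp (2 * Real.pi * Complex.I * τ) ^ (n + 1)‖ :=
              (norm_sub_le _ _)
          _ = 1 + r ^ (n + 1) := by rw [norm_one, norm_pow, habsq]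
      have h2 : (1 : ℝ) + r ^ (n + 1) ≤ Real.exp (r ^ (n + 1)) := by
        linarith [Real.add_one_le_exp (r ^ (n + 1))]
      calc ‖1 - Complex.exp (2 * Real.pi * Complex.I * τ) ^ (n + 1)‖ ^ 24
          ≤ (1 + r ^ (n + 1)) ^ 24 := by
            apply pow_le_pow_left₀ (by positivity) h1
        _ ≤ Real.exp (r ^ (n + 1)) ^ 24 := by
            apply pow_le_pow_left₀ (by positivity) h2
        _ = Real.exp (24 * r ^ (n + 1)) := by
            rw [← Real.exp_nat_mul]; norm_num
    calc ∏ n ∈ s, ‖1 - Complex.exp (2 * Real.pi * Complex.I * τ) ^ (n + 1)‖ ^ 24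
        ≤ ∏ n ∈ s, Real.exp (24 * r ^ (n + 1)) :=
          Finset.prod_le_prod (fun n _ => by positivity) (fun n _ => step n)
      _ = Real.exp (∑ n ∈ s, 24 * r ^ (n + 1)) := by rw [Real.exp_sum]
      _ ≤ A := by
          apply Real.exp_le_exp.mpr
          have : ∑ n ∈ s, 24 * r ^ (n + 1) ≤ ∑' n : ℕ, 24 * r ^ (n + 1) :=
            Summable.sum_le_tsum s (fun n _ => by positivity) (hsum.mul_left 24)
          rw [tsum_mul_left, htsum] at this
          linarith
  have hprod : (∏' n : ℕ,
      ‖1 - Complex.exp (2 * Real.pi * Complex.I * τ) ^ (n + 1)‖ ^ 24) ≤ A := by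
    by_cases hm : Multipliable
        (fun n : ℕ => ‖1 - Complex.exp (2 * Real.pi * Complex.I * τ) ^ (n + 1)‖ ^ 24)
    · exact hasProd_le_of_prod_le hm.hasProd hkey
    · rw [tprod_eq_one_of_not_multipliable hm]; exact hA1
  -- bound (2y)^6 ≤ exp (12 y / e)
  have hy6 : (2 * y) ^ 6 ≤ Real.exp (12 * y / Real.exp 1) := by
    have h2y : 2 * y ≤ Real.exp (2 * y / Real.exp 1) := by
      have := Real.add_one_le_exp (2 * y / Real.exp 1 - 1)
      rw [Real.exp_sub] at this
      have hE : 0 < Real.exp 1 := Real.exp_pos 1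
      have h' : 2 * y / Real.exp 1 ≤ Real.exp (2 * y / Real.exp 1) / Real.exp 1 := by linarith
      calc 2 * y = (2 * y / Real.exp 1) * Real.exp 1 := by field_simp
        _ ≤ (Real.exp (2 * y / Real.exp 1) / Real.exp 1) * Real.exp 1 := by
            apply mul_le_mul_of_nonneg_right h' hE.le
        _ = Real.exp (2 * y / Real.exp 1) := by field_simp
    calc (2 * y) ^ 6 ≤ Real.exp (2 * y / Real.exp 1) ^ 6 :=
          pow_le_pow_left₀ (by linarith) h2y 6
      _ = Real.exp (12 * y / Real.exp 1) := by
          rw [← Real.exp_nat_mul]; ring_nf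
  -- combine
  have hfinal : r * A * (2 * y) ^ 6 ≤ 1 := by
    calc r * A * (2 * y) ^ 6
        ≤ r * A * Real.exp (12 * y / Real.exp 1) := by
          apply mul_le_mul_of_nonneg_left hy6 (by positivity)
      _ = Real.exp (-(2 * Real.pi * y) + 24 * (r * (1 - r)⁻¹) + 12 * y / Real.exp 1) := by
          rw [hA, ← Real.exp_add, ← Real.exp_add]
      _ ≤ Real.exp 0 := by
          apply Real.exp_le_exp.mpr
          have hE : (2.7 : ℝ) ≤ Real.exp 1 := he1
          have h1 : 12 * y / Real.exp 1 ≤ 12 * y / 2.7 := by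
            apply div_le_div_of_nonneg_left (by linarith) (by norm_num) hE
          have hpy : 3.14 * y ≤ Real.pi * y :=
            mul_le_mul_of_nonneg_right hpi (by linarith)
          have h2 : 12 * y / 2.7 ≤ 4.45 * y := by rw [div_le_iff₀] <;> nlinarith
          linarith
      _ = 1 := Real.exp_zero
  calc ‖Complex.exp (2 * Real.pi * Complex.I * τ)‖ *
        (∏' n : ℕ,
          ‖1 - Complex.exp (2 * Real.pi * Complex.I * τ) ^ (n + 1)‖ ^ 24) *
        (2 * τ.im) ^ 6
      ≤ r * A * (2 * y) ^ 6 := by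
        rw [habsq]
        apply mul_le_mul_of_nonneg_right _ (by positivity)
        exact mul_le_mul_of_nonneg_left hprod hr0.le
    _ ≤ 1 := hfinal
end

section
/- For every real number t with t ≥ √3/2, one has exp(−2πt) · (2t)^6 · ∏_{n=1}^∞ (1 + exp(−2πnt))^{24} ≤ 1. -/
open Real

/-- For every real `t ≥ √3/2`, one has
`exp(−2πt) · (2t)^6 · ∏_{n=1}^∞ (1 + exp(−2πnt))^{24} ≤ 1`. -/
theorem stmt_1 (t : ℝ) (ht : Real.sqrt 3 / 2 ≤ t) :
    Real.exp (-(2 * Real.pi * t)) * (2 * t) ^ 6 *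
      (∏' n : ℕ, (1 + Real.exp (-(2 * Real.pi * (n + 1) * t))) ^ 24) ≤ 1 := by
  have hs3 : (5:ℝ)/3 ≤ Real.sqrt 3 := by
    rw [show (5:ℝ)/3 = Real.sqrt ((5/3)^2) by
      rw [Real.sqrt_sq (by norm_num : (0:ℝ) ≤ 5/3)]]
    exact Real.sqrt_le_sqrt (by norm_num)
  have ht' : (5:ℝ)/6 ≤ t := le_trans (by linarith) ht
  have htpos : 0 < t := by linarith
  have hpi := Real.pi_gt_three
  have hpipos := Real.pi_pos
  have hu5 : (5:ℝ) ≤ 2 * Real.pi * t := by nlinarith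
  set r := Real.exp (-(2 * Real.pi * t)) with hrdef
  have hr0 : 0 < r := Real.exp_pos _
  have hexp1 := Real.exp_one_gt_d9
  have hexp5 : (100:ℝ) ≤ Real.exp 5 := by
    have h2 : (2.7182818283:ℝ)^5 ≤ (Real.exp 1)^5 :=
      pow_le_pow_left₀ (by norm_num) hexp1.le 5
    have h : Real.exp 5 = Real.exp 1 ^ 5 := by
      rw [← Real.exp_nat_mul]; norm_num
    rw [h]; nlinarith
  have hexp6 : (400:ℝ) ≤ Real.exp 6 := by
    have h2 : (2.7182818283:ℝ)^6 ≤ (Real.exp 1)^6 :=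
      pow_le_pow_left₀ (by norm_num) hexp1.le 6
    have h : Real.exp 6 = Real.exp 1 ^ 6 := by
      rw [← Real.exp_nat_mul]; norm_num
    rw [h]; nlinarith
  have hr100 : r ≤ 1/100 := by
    have h1 : r ≤ Real.exp (-5) := Real.exp_le_exp.mpr (by linarith)
    have h2 : Real.exp (-5) ≤ 1/100 := by
      rw [Real.exp_neg]
      rw [inv_le_comm₀ (Real.exp_pos 5) (by norm_num)]
      linarith
    linarith
  have hr1 : r < 1 := by linarith
  -- Step 1: exp(-(2πt)) * (2t)^6 ≤ 1/2
  have hA : r * (2*t)^6 ≤ 1/2 := by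
    set u := 2 * Real.pi * t with hudef
    have hu0 : 0 < u := by linarith
    have h2t : 2*t = u/Real.pi := by field_simp [hudef]; ring
    have h1 : u/6 ≤ Real.exp (u/6 - 1) := by
      have := Real.add_one_le_exp (u/6 - 1); linarith
    have h2 : (u/6)^6 ≤ (Real.exp (u/6 - 1))^6 :=
      pow_le_pow_left₀ (by positivity) h1 6
    have h3 : (Real.exp (u/6 - 1))^6 = Real.exp (u - 6) := by
      rw [← Real.exp_nat_mul]; congr 1; ring
    have h4 : u^6 ≤ 6^6 * Real.exp (u - 6) := by
      calc u^6 = 6^6 * (u/6)^6 := by ring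
        _ ≤ 6^6 * (Real.exp (u/6 - 1))^6 :=
            mul_le_mul_of_nonneg_left h2 (by norm_num)
        _ = 6^6 * Real.exp (u - 6) := by rw [h3]
    have hre : r = Real.exp (-u) := by rw [hrdef, hudef]
    have h5 : r * u^6 ≤ 6^6 * Real.exp (-6) := by
      calc r * u^6 ≤ Real.exp (-u) * (6^6 * Real.exp (u-6)) := by
            rw [hre]; exact mul_le_mul_of_nonneg_left h4 (Real.exp_pos _).le
        _ = 6^6 * (Real.exp (-u) * Real.exp (u-6)) := by ring
        _ = 6^6 * Real.exp (-6) := by rw [← Real.exp_add]; ring_nf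
    have hpi6 : (729:ℝ) ≤ Real.pi^6 := by
      have := pow_le_pow_left₀ (by norm_num : (0:ℝ) ≤ 3) hpi.le 6
      norm_num at this; linarith
    have hexpneg6 : Real.exp (-6) ≤ 1/400 := by
      rw [Real.exp_neg, inv_le_comm₀ (Real.exp_pos 6) (by norm_num)]
      linarith
    have h6 : r * u^6 ≤ 729/2 := by nlinarith
    have h7 : r * (2*t)^6 = r * u^6 / Real.pi^6 := by
      rw [h2t]; field_simp
    rw [h7, div_le_iff₀ (by positivity)]
    linarith
  -- Step 2: the infinite product is ≤ 2
  have hkey : ∀ n : ℕ, Real.exp (-(2*Real.pi*(↑n+1)*t)) = r^(n+1) := by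
    intro n
    rw [hrdef, ← Real.exp_nat_mul]
    congr 1; push_cast; ring
  have hsa : Summable (fun n : ℕ => r^(n+1)) := by
    apply ((summable_geometric_of_lt_one hr0.le hr1).mul_left r).congr
    intro n; rw [pow_succ]; ring
  have hta : ∑' n : ℕ, r^(n+1) ≤ 1/50 := by
    have h1 : ∑' n : ℕ, r^(n+1) = r * ∑' n : ℕ, r^n := by
      rw [← tsum_mul_left]
      exact tsum_congr fun n => by rw [pow_succ]; ring
    rw [h1, tsum_geometric_of_lt_one hr0.le hr1]
    have hinv : (1-r)⁻¹ ≤ 2 := by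
      rw [inv_le_comm₀ (by linarith) (by norm_num)]
      linarith
    calc r * (1-r)⁻¹ ≤ (1/100) * 2 :=
          mul_le_mul hr100 hinv (inv_nonneg.mpr (by linarith)) (by norm_num)
      _ = 1/50 := by norm_num
  have hlog_nonneg : ∀ n : ℕ, 0 ≤ Real.log (1 + r^(n+1)) := fun n =>
    Real.log_nonneg (by nlinarith [pow_nonneg hr0.le (n+1)])
  have hlog_le : ∀ n : ℕ, Real.log (1 + r^(n+1)) ≤ r^(n+1) := by
    intro n
    have := Real.log_le_sub_one_of_pos
      (show (0:ℝ) < 1 + r^(n+1) from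
        add_pos_of_pos_of_nonneg one_pos (pow_nonneg hr0.le _))
    linarith
  have hsl : Summable (fun n : ℕ => Real.log (1 + r^(n+1))) :=
    Summable.of_nonneg_of_le hlog_nonneg hlog_le hsa
  have hslog : Summable (fun n : ℕ => Real.log ((1 + r^(n+1))^24)) := by
    apply (hsl.mul_left 24).congr
    intro n
    rw [Real.log_pow]; norm_num
  have hprodeq : (∏' n : ℕ, (1 + r^(n+1))^24)
      = Real.exp (∑' n : ℕ, Real.log ((1 + r^(n+1))^24)) := by
    have := Real.rexp_tsum_eq_tprod (f := fun n => (1 + r^(n+1))^24)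
      (fun n => pow_pos (add_pos_of_pos_of_nonneg one_pos (pow_nonneg hr0.le _)) 24)
      hslog
    exact this.symm
  have hsum_le : ∑' n : ℕ, Real.log ((1 + r^(n+1))^24) ≤ 1/2 := by
    have h1 : ∑' n : ℕ, Real.log ((1 + r^(n+1))^24)
        = 24 * ∑' n : ℕ, Real.log (1 + r^(n+1)) := by
      rw [← tsum_mul_left]
      exact tsum_congr fun n => by rw [Real.log_pow]; norm_num
    rw [h1]
    have h2 : ∑' n : ℕ, Real.log (1 + r^(n+1)) ≤ 1/50 :=
      le_trans (Summable.tsum_le_tsum hlog_le hsl hsa) hta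
    have h3 : 0 ≤ ∑' n : ℕ, Real.log (1 + r^(n+1)) :=
      tsum_nonneg hlog_nonneg
    linarith
  have hP : (∏' n : ℕ, (1 + r^(n+1))^24) ≤ 2 := by
    rw [hprodeq]
    have : Real.exp (∑' n : ℕ, Real.log ((1 + r^(n+1))^24)) ≤ Real.exp (1/2) :=
      Real.exp_le_exp.mpr hsum_le
    have h2 : Real.exp (1/2) ≤ 2 := by
      rw [← Real.le_log_iff_exp_le (by norm_num)]
      have := Real.log_two_gt_d9
      linarith
    linarith
  have hPnonneg : 0 ≤ (∏' n : ℕ, (1 + r^(n+1))^24) := by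
    rw [hprodeq]; exact (Real.exp_pos _).le
  -- Combine
  have hre : (∏' n : ℕ, (1 + Real.exp (-(2 * Real.pi * (↑n + 1) * t))) ^ 24)
      = ∏' n : ℕ, (1 + r^(n+1))^24 :=
    tprod_congr fun n => by rw [hkey n]
  rw [hre]
  calc r * (2*t)^6 * (∏' n : ℕ, (1 + r^(n+1))^24) ≤ (1/2) * 2 :=
        mul_le_mul hA hP hPnonneg (by norm_num)
    _ = 1 := by norm_num
end
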